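/- Let α ∈ (0,1) and λ ∈ ℝ. Then for all t ∈ [a,b), the right ψ-Caputo derivative of the function t ↦ E_α(λ(ψ(b) − ψ(t))^α) satisfies ^CD_{b−}^{α,ψ}[E_α(λ(ψ(b) − ψ(·))^α)](t) = λ · E_α(λ(ψ(b) − ψ(t))^α). -/

import Mathlib

/-!
Write `Δ = ψ b - ψ t`. For `x s = F (ψ b - ψ s)`, the substitutions `v = ψ τ` and `u = ψ b - v`
turn the right ψ-Caputo derivative of `x` at `t` into the classical Caputo derivative
`Γ(1-α)⁻¹ ∫₀^Δ (Δ - u)^(-α) F'(u) du` of `F` at `Δ`. For `F u = E_α(λ u^α)` one has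
`F' u = λ u^(α-1) E_{α,α}(λ u^α)`, and integrating this series term by term against
`(Δ - u)^(-α)` with Euler's Beta integral gives `Γ(1-α) λ E_α(λ Δ^α)`.
-/

open Real Set

/-- The right ψ-Caputo fractional derivative of order `α ∈ (0,1)` with upper terminal `b`. -/
noncomputable def psiCaputoRight (b α : ℝ) (ψ x : ℝ → ℝ) (t : ℝ) : ℝ :=
  -(1 / Real.Gamma (1 - α)) * ∫ τ in t..b, (ψ τ - ψ t) ^ (-α) * deriv x τ

/-- The (real) Mittag-Leffler function `E_α(z) = Σ_{k=0}^∞ z^k / Γ(αk+1)`. -/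
noncomputable def mittagLeffler (α z : ℝ) : ℝ :=
  ∑' k : ℕ, z ^ k / Real.Gamma (α * k + 1)

open Filter MeasureTheory
open scoped Nat

/-- The two-parameter Mittag-Leffler function `E_{α,β}`, so that `E_α = E_{α,1}`. -/
noncomputable def mittagLeffler₂ (α β z : ℝ) : ℝ :=
  ∑' k : ℕ, z ^ k / Gamma (α * k + β)

lemma eventually_rpow_le_Gamma {R : ℝ} (hR : 1 ≤ R) : ∀ᶠ x in atTop, R ^ x ≤ Gamma x := by
  have hfac : ∀ᶠ n : ℕ in atTop, 1 ≤ n ∧ R ^ (n + 2) ≤ n ! := by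
    filter_upwards [FloorSemiring.eventually_mul_pow_lt_factorial_sub (R ^ 2) R 0,
      eventually_ge_atTop 1] with n hn h1
    exact ⟨h1, by simpa [pow_add, mul_comm] using hn.le⟩
  have hfloor : Tendsto (fun x : ℝ => ⌊x - 1⌋₊) atTop atTop :=
    tendsto_nat_floor_atTop.comp (tendsto_atTop_add_const_right _ (-1) tendsto_id)
  filter_upwards [hfloor.eventually hfac, eventually_ge_atTop 1] with x ⟨hn1, hn⟩ hx
  set n := ⌊x - 1⌋₊
  have hnx : (n : ℝ) + 1 ≤ x := by linarith [Nat.floor_le (sub_nonneg.2 hx)]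
  have hxn : x ≤ n + 2 := by linarith [Nat.lt_floor_add_one (x - 1)]
  calc R ^ x ≤ R ^ ((n + 2 : ℕ) : ℝ) := rpow_le_rpow_of_exponent_le hR (by push_cast; exact hxn)
    _ ≤ n ! := by rw [rpow_natCast]; exact hn
    _ = Gamma (n + 1) := (Gamma_nat_eq_factorial n).symm
    _ ≤ Gamma x := Gamma_strictMonoOn_Ici.monotoneOn
        (by simp only [mem_Ici]; exact_mod_cast Nat.succ_le_succ hn1)
        (by simp only [mem_Ici]; linarith [(Nat.one_le_cast (α := ℝ)).2 hn1]) hnx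

lemma summable_pow_div_Gamma {α : ℝ} (hα : 0 < α) (β z : ℝ) :
    Summable fun k : ℕ => z ^ k / Gamma (α * k + β) := by
  -- `Γ (α k + β) ≥ R ^ (α k + β) = R ^ β (|z| + 1) ^ k` eventually, a geometric bound.
  set R := (|z| + 1) ^ α⁻¹
  have hz : 0 < |z| + 1 := by positivity
  have hR : 1 ≤ R := one_le_rpow (by linarith [abs_nonneg z]) (inv_nonneg.2 hα.le)
  have hRα : R ^ α = |z| + 1 := by rw [← rpow_mul hz.le, inv_mul_cancel₀ hα.ne', rpow_one]
  have hlin : Tendsto (fun k : ℕ => α * k + β) atTop atTop :=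
    tendsto_atTop_add_const_right _ β (tendsto_natCast_atTop_atTop.const_mul_atTop hα)
  refine .of_norm_bounded_eventually_nat (g := fun k => (|z| / (|z| + 1)) ^ k / R ^ β)
    ((summable_geometric_of_lt_one (by positivity) ((div_lt_one hz).2 (lt_add_one _))).div_const _)
    ?_
  filter_upwards [hlin.eventually (eventually_rpow_le_Gamma hR)] with k hk
  have hRk : R ^ (α * k + β) = (|z| + 1) ^ k * R ^ β := by
    rw [rpow_add (by positivity), rpow_mul (by positivity), hRα, rpow_natCast]
  have hΓ : 0 < Gamma (α * k + β) := (rpow_pos_of_pos (by positivity) _).trans_le hk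
  rw [norm_div, norm_pow, Real.norm_eq_abs, Real.norm_eq_abs, abs_of_pos hΓ, div_pow, div_div,
    ← hRk]
  gcongr

lemma hasSum_nat_mul_pow_div_Gamma {α : ℝ} (hα : 0 < α) (z : ℝ) :
    HasSum (fun k : ℕ => k * z ^ (k - 1) / Gamma (α * k + 1)) (mittagLeffler₂ α α z / α) := by
  rw [← hasSum_nat_add_iff' 1]
  simp only [Finset.range_one, Finset.sum_singleton, CharP.cast_eq_zero, zero_mul, zero_div,
    sub_zero, Nat.add_sub_cancel]
  have hterm : (fun k : ℕ => ((k + 1 : ℕ) : ℝ) * z ^ k / Gamma (α * (k + 1 : ℕ) + 1)) =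
      fun k : ℕ => z ^ k / Gamma (α * k + α) / α := by
    funext k
    have hk : α * (k + 1) ≠ 0 := by positivity
    push_cast
    rw [Gamma_add_one hk]
    field_simp
  rw [hterm]
  exact (summable_pow_div_Gamma hα α z).hasSum.div_const α

lemma hasDerivAt_mittagLeffler {α : ℝ} (hα : 0 < α) (z : ℝ) :
    HasDerivAt (mittagLeffler α) (mittagLeffler₂ α α z / α) z := by
  set r := |z| + 1
  have h := hasDerivAt_tsum_of_isPreconnected
    (g := fun (k : ℕ) (y : ℝ) => y ^ k / Gamma (α * k + 1))
    (g' := fun k y => k * y ^ (k - 1) / Gamma (α * k + 1))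
    (hasSum_nat_mul_pow_div_Gamma hα r).summable Metric.isOpen_ball
    (convex_ball 0 r).isPreconnected
    (fun k y _ => by simpa using (hasDerivAt_pow k y).div_const (Gamma (α * k + 1)))
    (fun k y hy => ?_) (Metric.mem_ball_self (by positivity)) (summable_pow_div_Gamma hα 1 0)
    (mem_ball_zero_iff.2 (lt_add_one _))
  · rwa [(hasSum_nat_mul_pow_div_Gamma hα z).tsum_eq] at h
  have hy : |y| ≤ r := by simpa using (Metric.mem_ball.1 hy).le
  rw [norm_div, norm_mul, norm_pow, Real.norm_eq_abs, Real.norm_eq_abs, Real.norm_eq_abs,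
    Nat.abs_cast, abs_of_pos (Gamma_pos_of_pos (by positivity))]
  gcongr

lemma mul_rpow_pow {u : ℝ} (hu : 0 ≤ u) (lam α : ℝ) (k : ℕ) :
    (lam * u ^ α) ^ k = lam ^ k * u ^ (α * k) := by
  rw [mul_pow, ← rpow_natCast (u ^ α), ← rpow_mul hu]

lemma hasDerivAt_mittagLeffler_mul_rpow {α : ℝ} (hα : 0 < α) (lam : ℝ) {u : ℝ} (hu : 0 < u) :
    HasDerivAt (fun u => mittagLeffler α (lam * u ^ α))
      (lam * (u ^ (α - 1) * mittagLeffler₂ α α (lam * u ^ α))) u := by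
  refine ((hasDerivAt_mittagLeffler hα _).comp u
    ((hasDerivAt_rpow_const (p := α) (Or.inl hu.ne')).const_mul lam)).congr_deriv ?_
  field_simp

lemma integral_rpow_mul_rpow_sub {p q s : ℝ} (hp : 0 < p) (hq : 0 < q) (hs : 0 < s) :
    ∫ x in 0..s, x ^ (p - 1) * (s - x) ^ (q - 1) =
      s ^ (p + q - 1) * (Gamma p * Gamma q / Gamma (p + q)) := by
  have hB := Complex.Gamma_mul_Gamma_eq_betaIntegral (s := p) (t := q) (by simpa) (by simpa)
  have hΓ : Complex.Gamma (p + q) ≠ 0 := by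
    rw [← Complex.ofReal_add, Complex.Gamma_ofReal]
    exact_mod_cast (Gamma_pos_of_pos (add_pos hp hq)).ne'
  apply Complex.ofReal_injective
  calc ((∫ x in 0..s, x ^ (p - 1) * (s - x) ^ (q - 1) : ℝ) : ℂ)
      = ∫ x in 0..s, (x : ℂ) ^ ((p : ℂ) - 1) * ((s : ℂ) - x) ^ ((q : ℂ) - 1) := by
        rw [← intervalIntegral.integral_ofReal]
        refine intervalIntegral.integral_congr fun x hx => ?_
        rw [uIcc_of_le hs.le] at hx
        push_cast [Complex.ofReal_cpow hx.1, Complex.ofReal_cpow (sub_nonneg.2 hx.2)]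
        rfl
    _ = (s : ℂ) ^ ((p : ℂ) + q - 1) * Complex.betaIntegral p q :=
        Complex.betaIntegral_scaled _ _ hs
    _ = _ := by
        have hB' : Complex.betaIntegral p q =
            Complex.Gamma p * Complex.Gamma q / Complex.Gamma (p + q) :=
          eq_div_of_mul_eq hΓ (by rw [hB, mul_comm])
        rw [hB']
        push_cast [Complex.ofReal_cpow hs.le, ← Complex.Gamma_ofReal]
        rfl

lemma integral_tsum_mul_of_nonneg {X : Type*} [MeasurableSpace X] {μ : Measure X}
    {c : ℕ → ℝ} {G : ℕ → X → ℝ} (hG : ∀ k, Integrable (G k) μ) (hG0 : ∀ k, 0 ≤ᵐ[μ] G k)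
    (hc : Summable fun k => |c k| * ∫ x, G k x ∂μ) :
    ∫ x, ∑' k, c k * G k x ∂μ = ∑' k, c k * ∫ x, G k x ∂μ := by
  have hnorm : ∀ k, ∫ x, ‖c k * G k x‖ ∂μ = |c k| * ∫ x, G k x ∂μ := fun k => by
    rw [← integral_const_mul]
    refine integral_congr_ae ((hG0 k).mono fun x hx => ?_)
    simp only [norm_mul, Real.norm_eq_abs, abs_of_nonneg (show 0 ≤ G k x from hx)]
  rw [← integral_tsum_of_summable_integral_norm (fun k => (hG k).const_mul (c k))
    (by simpa only [hnorm] using hc)]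
  simp only [integral_const_mul]

lemma integral_sub_rpow_mul_rpow_mul_mittagLeffler₂ {α β μ s : ℝ} (hα : 0 < α) (hβ : 0 < β)
    (hμ : 0 < μ) (hs : 0 < s) (lam : ℝ) :
    ∫ u in 0..s, (s - u) ^ (μ - 1) * (u ^ (β - 1) * mittagLeffler₂ α β (lam * u ^ α)) =
      Gamma μ * (s ^ (β + μ - 1) * mittagLeffler₂ α (β + μ) (lam * s ^ α)) := by
  set G : ℕ → ℝ → ℝ := fun k u => u ^ (α * k + β - 1) * (s - u) ^ (μ - 1)
  have hGint : ∀ k : ℕ, ∫ u in Ioc 0 s, G k u =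
      s ^ (α * k + β + μ - 1) * (Gamma (α * k + β) * Gamma μ / Gamma (α * k + β + μ)) := by
    intro k
    rw [← intervalIntegral.integral_of_le hs.le]
    exact integral_rpow_mul_rpow_sub (by positivity) hμ hs
  -- A nonzero interval integral certifies integrability.
  have hGi : ∀ k, IntegrableOn (G k) (Ioc 0 s) := fun k =>
    (intervalIntegrable_iff_integrableOn_Ioc_of_le hs.le).1 <|
      intervalIntegral.intervalIntegrable_of_integral_ne_zero <| by
        rw [intervalIntegral.integral_of_le hs.le, hGint]; positivity
  have hG0 : ∀ k, 0 ≤ᵐ[volume.restrict (Ioc 0 s)] G k := fun k =>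
    (ae_restrict_iff' measurableSet_Ioc).2 <| .of_forall fun u hu =>
      mul_nonneg (rpow_nonneg hu.1.le _) (rpow_nonneg (sub_nonneg.2 hu.2) _)
  have hterm : ∀ (l : ℝ) (k : ℕ), l ^ k / Gamma (α * k + β) * ∫ u in Ioc 0 s, G k u =
      Gamma μ * (s ^ (β + μ - 1) * ((l * s ^ α) ^ k / Gamma (α * k + (β + μ)))) := by
    intro l k
    have hΓ : Gamma (α * k + β) ≠ 0 := (Gamma_pos_of_pos (by positivity)).ne'
    rw [hGint, mul_rpow_pow hs.le, show α * k + β + μ - 1 = α * k + (β + μ - 1) by ring,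
      rpow_add hs, ← add_assoc]
    field_simp
  have hintegrand : ∀ u ∈ Ioc 0 s,
      (s - u) ^ (μ - 1) * (u ^ (β - 1) * mittagLeffler₂ α β (lam * u ^ α)) =
        ∑' k : ℕ, lam ^ k / Gamma (α * k + β) * G k u := by
    intro u hu
    rw [mittagLeffler₂, ← tsum_mul_left, ← tsum_mul_left]
    refine tsum_congr fun k => ?_
    dsimp only [G]
    rw [mul_rpow_pow hu.1.le, show α * k + β - 1 = α * k + (β - 1) by ring, rpow_add hu.1]
    ring
  rw [intervalIntegral.integral_of_le hs.le, setIntegral_congr_fun measurableSet_Ioc hintegrand,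
    integral_tsum_mul_of_nonneg hGi hG0, tsum_congr (hterm lam), tsum_mul_left, tsum_mul_left]
  · rfl
  · refine (((summable_pow_div_Gamma hα (β + μ) (|lam| * s ^ α)).mul_left
      (s ^ (β + μ - 1))).mul_left (Gamma μ)).congr fun k => ?_
    rw [← hterm, abs_div, abs_pow, abs_of_pos (Gamma_pos_of_pos (by positivity))]

lemma psiCaputoRight_comp_sub {b t α : ℝ} {ψ F F' : ℝ → ℝ} (htb : t ≤ b)
    (hψc : ContinuousOn ψ (Icc t b)) (hψm : StrictMonoOn ψ (Icc t b))
    (hψd : ∀ τ ∈ Ioo t b, DifferentiableAt ℝ ψ τ) (hF : ∀ u ∈ Ioi 0, HasDerivAt F (F' u) u) :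
    psiCaputoRight b α ψ (fun s => F (ψ b - ψ s)) t =
      (Gamma (1 - α))⁻¹ * ∫ u in 0..ψ b - ψ t, (ψ b - ψ t - u) ^ (-α) * F' u := by
  set g : ℝ → ℝ := fun v => (ψ b - ψ t - (ψ b - v)) ^ (-α) * F' (ψ b - v)
  have hintegrand : ∀ τ ∈ Ioo t b,
      (ψ τ - ψ t) ^ (-α) * deriv (fun s => F (ψ b - ψ s)) τ = -(g (ψ τ) * deriv ψ τ) := by
    intro τ hτ
    have hpos : 0 < ψ b - ψ τ := sub_pos.2 (hψm ⟨hτ.1.le, hτ.2.le⟩ ⟨htb, le_rfl⟩ hτ.2)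
    have hcomp : HasDerivAt (fun s => F (ψ b - ψ s)) (F' (ψ b - ψ τ) * -deriv ψ τ) τ :=
      (hF _ hpos).comp τ ((hψd τ hτ).hasDerivAt.const_sub (ψ b))
    rw [hcomp.deriv]
    simp only [g, sub_sub_sub_cancel_left]
    ring
  have hmono_deriv : ∀ τ ∈ Ioo t b, 0 ≤ deriv ψ τ := fun τ hτ =>
    (hψd τ hτ).hasDerivAt.hasDerivWithinAt.nonneg_of_monotoneOn (isOpen_Ioo.preperfect τ hτ)
      (hψm.monotoneOn.mono Ioo_subset_Icc_self)
  have hchange : ∫ τ in t..b, g (ψ τ) * deriv ψ τ = ∫ v in ψ t..ψ b, g v :=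
    intervalIntegral.integral_comp_mul_deriv_of_deriv_nonneg (g := g) (by rwa [uIcc_of_le htb])
      (by rw [min_eq_left htb, max_eq_right htb]; exact fun τ hτ => (hψd τ hτ).hasDerivAt)
      (by rwa [min_eq_left htb, max_eq_right htb])
  have hreflect := intervalIntegral.integral_comp_sub_left
    (fun u => (ψ b - ψ t - u) ^ (-α) * F' u) (a := ψ t) (b := ψ b) (ψ b)
  rw [sub_self] at hreflect
  rw [psiCaputoRight, intervalIntegral.integral_congr_ae (g := fun τ => -(g (ψ τ) * deriv ψ τ)),
    intervalIntegral.integral_neg, hchange, ← hreflect]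
  · ring
  filter_upwards [compl_mem_ae_iff.2 (measure_singleton b)] with τ hτb hτ
  rw [uIoc_of_le htb] at hτ
  exact hintegrand τ ⟨hτ.1, lt_of_le_of_ne hτ.2 hτb⟩

theorem caputo_right_mittagLeffler_general (a b α lam : ℝ) (ψ : ℝ → ℝ)
    (hψ : ContDiffOn ℝ 1 ψ (Set.Icc a b))
    (hmono : StrictMonoOn ψ (Set.Icc a b))
    (hα : α ∈ Set.Ioo (0 : ℝ) 1) :
    ∀ t ∈ Set.Ico a b,
      psiCaputoRight b α ψ (fun s => mittagLeffler α (lam * (ψ b - ψ s) ^ α)) t =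
        lam * mittagLeffler α (lam * (ψ b - ψ t) ^ α) := by
  rintro t ⟨hat, htb⟩
  have hsub : Icc t b ⊆ Icc a b := Icc_subset_Icc_left hat
  have hΔ : 0 < ψ b - ψ t := sub_pos.2 (hmono ⟨hat, htb.le⟩ ⟨hat.trans htb.le, le_rfl⟩ htb)
  have hψd : ∀ τ ∈ Ioo t b, DifferentiableAt ℝ ψ τ := fun τ hτ =>
    (hψ.differentiableOn one_ne_zero).differentiableAt
      (Icc_mem_nhds (hat.trans_lt hτ.1) hτ.2)
  have hfrac := integral_sub_rpow_mul_rpow_mul_mittagLeffler₂ hα.1 hα.1 (sub_pos.2 hα.2) hΔ lam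
  rw [show 1 - α - 1 = -α by ring, show α + (1 - α) = 1 by ring, sub_self, rpow_zero,
    one_mul] at hfrac
  rw [psiCaputoRight_comp_sub htb.le (hψ.continuousOn.mono hsub) (hmono.mono hsub) hψd
    (fun u hu => hasDerivAt_mittagLeffler_mul_rpow hα.1 lam hu)]
  simp_rw [mul_left_comm _ lam]
  rw [intervalIntegral.integral_const_mul, hfrac, mul_left_comm,
    inv_mul_cancel_left₀ (Gamma_pos_of_pos (sub_pos.2 hα.2)).ne']
  rfl

theorem caputo_right_mittagLeffler (a b α lam : ℝ) (ψ : ℝ → ℝ) (hab : a < b)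
    (hψ : ContDiffOn ℝ 1 ψ (Set.Icc a b))
    (hmono : StrictMonoOn ψ (Set.Icc a b))
    (hψ' : ∀ t ∈ Set.Icc a b, deriv ψ t ≠ 0)
    (hα : α ∈ Set.Ioo (0 : ℝ) 1) :
    ∀ t ∈ Set.Ico a b,
      psiCaputoRight b α ψ (fun s => mittagLeffler α (lam * (ψ b - ψ s) ^ α)) t =
        lam * mittagLeffler α (lam * (ψ b - ψ t) ^ α) :=
  caputo_right_mittagLeffler_general a b α lam ψ hψ hmono hα
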